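/- Let V be a finite alphabet and consider the complete quadtree of depth d_max on the blocks of a 2^{d_max} × 2^{d_max} grid, with hyperparameters g_s ∈ [0,1] on the blocks, g_s = 0 for blocks of cardinality 1, and model prior p(m) = ∏_{s ∈ L^m}(1 − g_s) ∏_{s' ∈ I^m} g_{s'} on the set M of full quadtrees of depth ≤ d_max. Suppose for each block s and each time t there is a strictly positive conditional pmf q̃(· | v^{t−1}, s) on V, and for a model m the likelihood of data is p(v^t | m) = ∏_{i ≤ t} q̃(v_i | v^{i−1}, s_m(i)), where s_m(i) is the unique leaf of m containing pixel i. Define g_{s|−1} := g_s, and for t ≥ 0 define recursively q(v_t | v^{t−1}, s) := q̃(v_t | v^{t−1}, s) if |s| = 1, and q(v_t | v^{t−1}, s) := (1 − g_{s|t−1}) q̃(v_t | v^{t−1}, s) + g_{s|t−1} q(v_t | v^{t−1}, s_child) otherwise, where s_child is the child of s on the path S_t of blocks containing pixel t; and update g_{s|t} := g_{s|t−1} if s ∉ S_t or |s| = 1, and g_{s|t} := g_{s|t−1} q(v_t | v^{t−1}, s_child) / q(v_t | v^{t−1}, s) if s ∈ S_t and |s| > 1. Then for every t, the Bayes optimal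 coding probability q*(v_t | v^{t−1}) := ∑_{m ∈ M} p(m | v^{t−1}) q̃(v_t | v^{t−1}, s_m(t)) equals q(v_t | v^{t−1}, s_λ), where p(m | v^{t−1}) ∝ p(m) p(v^{t−1} | m) and s_λ is the root block. -/

import Mathlib

inductive FullTree (k : ℕ) : ℕ → Type where
  | leaf {D : ℕ} : FullTree k D
  | node {D : ℕ} (c : Fin k → FullTree k D) : FullTree k (D + 1)

namespace FullTree

def equivZero (k : ℕ) : FullTree k 0 ≃ Unit where
  toFun _ := ()
  invFun _ := .leaf
  left_inv t := by cases t; rfl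
  right_inv _ := rfl

def equivSucc (k D : ℕ) : FullTree k (D + 1) ≃ Option (Fin k → FullTree k D) where
  toFun t := match t with
    | .leaf => none
    | .node c => some c
  invFun o := match o with
    | none => .leaf
    | some c => .node c
  left_inv t := by cases t <;> rfl
  right_inv o := by cases o <;> rfl

instance instFintype (k : ℕ) : (D : ℕ) → Fintype (FullTree k D)
  | 0 => Fintype.ofEquiv Unit (equivZero k).symm
  | (D + 1) => letI := instFintype k D; Fintype.ofEquiv _ (equivSucc k D).symm

noncomputable instance (k D : ℕ) : DecidableEq (FullTree k D) := Classical.decEq _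

/-- The set of (paths to) leaf nodes of a full subtree whose root has path `u`. -/
def leaves {k : ℕ} : {D : ℕ} → List (Fin k) → FullTree k D → Finset (List (Fin k))
  | _, u, .leaf => {u}
  | _, u, .node c => Finset.univ.biUnion fun i => leaves (u ++ [i]) (c i)

/-- The set of (paths to) inner nodes of a full subtree whose root has path `u`. -/
def inners {k : ℕ} : {D : ℕ} → List (Fin k) → FullTree k D → Finset (List (Fin k))
  | _, _, .leaf => ∅
  | _, u, .node c => insert u (Finset.univ.biUnion fun i => inners (u ++ [i]) (c i))

/-- The weight ∏_{u ∈ L^T} (1 - g u) * ∏_{u ∈ I^T} g u of a full subtree rooted at path `u`. -/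
noncomputable def weight {k D : ℕ} (g : List (Fin k) → ℝ) (u : List (Fin k))
    (T : FullTree k D) : ℝ :=
  (∏ s ∈ leaves u T, (1 - g s)) * ∏ s ∈ inners u T, g s

end FullTree

namespace FullTree

/-- Follow the path `p` down the full subtree `T` (whose root has path `u`) until a leaf of
`T` is reached; returns the path of that leaf.  For a pixel `p` (a path of full length
`dmax`), `leafOf [] m p` is the unique leaf block `s_m` of `m` containing the pixel `p`. -/
def leafOf {k : ℕ} : {D : ℕ} → List (Fin k) → FullTree k D → List (Fin k) → List (Fin k)
  | _, u, .leaf, _ => u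
  | _, u, .node _, [] => u
  | _, u, .node c, i :: p => leafOf (u ++ [i]) (c i) p

end FullTree

/-- The likelihood `p(v^{t-1} | m) = ∏_{i < t} q̃(v_i | v^{i-1}, s_m(i))` of the first `t`
pixel values under model `m`, where `qt i s x = q̃(x | v^{i-1}, s)` is the per-block
predictive pmf and `s_m(i)` the unique leaf of `m` containing pixel `i`. -/
noncomputable def like (dmax : ℕ) {V : Type} (qt : ℕ → List (Fin 4) → V → ℝ)
    (v : ℕ → V) (pix : ℕ → List (Fin 4)) (m : FullTree 4 dmax) (t : ℕ) : ℝ :=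
  ∏ i ∈ Finset.range t, qt i (FullTree.leafOf [] m (pix i)) (v i)

/-- `Qd dmax qt v pix G t j` is the recursively mixed coding probability
`q(v_t | v^{t-1}, s)` at the block `s = (pix t).take (dmax - j)` on the path `S_t` of blocks
containing pixel `t` (`j` is the distance from `s` down to the singleton block of `S_t`),
computed with the current weights `G = g_{·|t-1}`:
`q = q̃` at singleton blocks and `q = (1 - g_{s|t-1}) q̃ + g_{s|t-1} q(child)` otherwise. -/
noncomputable def Qd (dmax : ℕ) {V : Type} (qt : ℕ → List (Fin 4) → V → ℝ)
    (v : ℕ → V) (pix : ℕ → List (Fin 4)) (G : List (Fin 4) → ℝ) (t : ℕ) : ℕ → ℝ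
  | 0 => qt t ((pix t).take dmax) (v t)
  | j + 1 =>
    (1 - G ((pix t).take (dmax - (j + 1)))) * qt t ((pix t).take (dmax - (j + 1))) (v t)
      + G ((pix t).take (dmax - (j + 1))) * Qd dmax qt v pix G t j

/-- One step of the weight update: `g_{s|t} = g_{s|t-1}` if `s ∉ S_t` or `|s| = 1`
(`s ∈ S_t` iff `s` is a prefix of the pixel path `pix t`; `|s| = 1` iff `s.length = dmax`),
and `g_{s|t} = g_{s|t-1} · q(v_t | v^{t-1}, s_child) / q(v_t | v^{t-1}, s)` otherwise. -/
noncomputable def Gnext (dmax : ℕ) {V : Type} (qt : ℕ → List (Fin 4) → V → ℝ)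
    (v : ℕ → V) (pix : ℕ → List (Fin 4)) (G : List (Fin 4) → ℝ) (t : ℕ)
    (s : List (Fin 4)) : ℝ :=
  if s <+: pix t ∧ s.length < dmax then
    G s * Qd dmax qt v pix G t (dmax - s.length - 1) / Qd dmax qt v pix G t (dmax - s.length)
  else G s

/-- `GT dmax qt v pix g t s = g_{s|t-1}`: the sequentially updated weights, with
`GT ... 0 s = g_{s|-1} = g s`. -/
noncomputable def GT (dmax : ℕ) {V : Type} (qt : ℕ → List (Fin 4) → V → ℝ)
    (v : ℕ → V) (pix : ℕ → List (Fin 4)) (g : List (Fin 4) → ℝ) : ℕ → List (Fin 4) → ℝ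
  | 0 => g
  | t + 1 => Gnext dmax qt v pix (GT dmax qt v pix g t) t

/-!
Write `P_D(u, t)` for the Bayes mixture, over the full subtrees of depth `≤ D` rooted at the
block `u`, of the likelihood of the values seen before time `t` at the pixels of `u`. It obeys
the recursion `P(u) = (1 - g_u) P_e(u) + g_u ∏ P(children)`, where `P_e(u)` is the likelihood
of `u` left unsplit. The sequential weights `g_{u|t-1}` are the posterior split probabilities
`g_u ∏ P(children) / P(u)`; given this invariant, processing pixel `t` multiplies `P(u)` by
`q(v_t | v^{t-1}, u)` for every block `u ∈ S_t`, so `q` at the root is the ratio of two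
consecutive root mixtures, which is the Bayes predictive probability.
-/

open Finset

theorem List.append_singleton_prefix_iff {α : Type*} {u l : List α} {a : α}
    (h : u.length < l.length) : u ++ [a] <+: l ↔ u <+: l ∧ l[u.length] = a := by
  rw [List.prefix_iff_eq_take, List.prefix_iff_eq_take (l₁ := u), List.length_append,
    List.length_singleton, ← List.take_append_getElem h, List.append_singleton_inj,
    eq_comm (a := a)]

namespace FullTree

variable {k : ℕ}

theorem prefix_of_mem_leaves :
    ∀ {D : ℕ} {u s : List (Fin k)} {T : FullTree k D}, s ∈ leaves u T → u <+: s
  | _, _, _, .leaf, h => by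
    rw [leaves, Finset.mem_singleton] at h
    exact h ▸ List.prefix_refl _
  | _, u, _, .node _, h => by
    obtain ⟨i, -, hi⟩ := Finset.mem_biUnion.1 h
    exact (u.prefix_append [i]).trans (prefix_of_mem_leaves hi)

theorem prefix_of_mem_inners :
    ∀ {D : ℕ} {u s : List (Fin k)} {T : FullTree k D}, s ∈ inners u T → u <+: s
  | _, _, _, .leaf, h => by simp [inners] at h
  | _, u, _, .node _, h => by
    rcases Finset.mem_insert.1 h with rfl | h
    · exact List.prefix_refl _
    · obtain ⟨i, -, hi⟩ := Finset.mem_biUnion.1 h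
      exact (u.prefix_append [i]).trans (prefix_of_mem_inners hi)

theorem disjoint_of_forall_append_singleton_prefix {α : Type*} {u : List α}
    {S : α → Finset (List α)} (hS : ∀ a, ∀ s ∈ S a, u ++ [a] <+: s) {a b : α}
    (hab : a ≠ b) :
    Disjoint (S a) (S b) := by
  refine Finset.disjoint_left.2 fun s ha hb => hab ?_
  have := ((hS a s ha).getElem (i := u.length) (by simp)).trans
    ((hS b s hb).getElem (i := u.length) (by simp)).symm
  simpa using this

theorem weight_leaf {D : ℕ} (g : List (Fin k) → ℝ) (u : List (Fin k)) :
    weight g u (.leaf : FullTree k D) = 1 - g u := by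
  simp [weight, leaves, inners]

theorem weight_node {D : ℕ} (g : List (Fin k) → ℝ) (u : List (Fin k))
    (c : Fin k → FullTree k D) :
    weight g u (.node c) = g u * ∏ i, weight g (u ++ [i]) (c i) := by
  have hu : u ∉ univ.biUnion fun i => inners (u ++ [i]) (c i) := by
    simp only [Finset.mem_biUnion, Finset.mem_univ, true_and, not_exists]
    intro i hi
    simpa using (prefix_of_mem_inners hi).length_le
  rw [weight, leaves, inners, Finset.prod_insert hu, Finset.prod_biUnion, Finset.prod_biUnion,
    mul_left_comm, ← Finset.prod_mul_distrib]
  · rfl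
  · exact fun i _ j _ => disjoint_of_forall_append_singleton_prefix fun _ _ => prefix_of_mem_inners
  · exact fun i _ j _ => disjoint_of_forall_append_singleton_prefix fun _ _ => prefix_of_mem_leaves

theorem sum_univ_zero {β : Type*} [AddCommMonoid β] (f : FullTree k 0 → β) :
    ∑ T, f T = f .leaf := by
  rw [← (equivZero k).symm.sum_comp, Fintype.sum_unique]
  rfl

theorem sum_univ_succ {β : Type*} [AddCommMonoid β] {D : ℕ} (f : FullTree k (D + 1) → β) :
    ∑ T, f T = f .leaf + ∑ c : Fin k → FullTree k D, f (.node c) := by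
  rw [← (equivSucc k D).symm.sum_comp, Fintype.sum_option]
  rfl

end FullTree

section Likelihood

variable {k : ℕ} {V : Type*} (qt : ℕ → List (Fin k) → V → ℝ) (v : ℕ → V)
  (pix : ℕ → List (Fin k)) (g : List (Fin k) → ℝ)

noncomputable def blockLik (u : List (Fin k)) (t : ℕ) : ℝ :=
  ∏ i ∈ range t, if u <+: pix i then qt i u (v i) else 1

noncomputable def treeLik {D : ℕ} (u : List (Fin k)) (T : FullTree k D) (t : ℕ) : ℝ :=
  ∏ i ∈ range t, if u <+: pix i then qt i (T.leafOf u ((pix i).drop u.length)) (v i) else 1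

noncomputable def mixLik (D : ℕ) (u : List (Fin k)) (t : ℕ) : ℝ :=
  ∑ T : FullTree k D, FullTree.weight g u T * treeLik qt v pix u T t

variable {qt v pix g}

theorem blockLik_succ (u : List (Fin k)) (t : ℕ) :
    blockLik qt v pix u (t + 1) = blockLik qt v pix u t * if u <+: pix t then qt t u (v t) else 1 :=
  prod_range_succ _ _

theorem blockLik_pos (hqt : ∀ t s x, 0 < qt t s x) (u : List (Fin k)) (t : ℕ) :
    0 < blockLik qt v pix u t :=
  prod_pos fun i _ => by split_ifs <;> simp [hqt]

theorem treeLik_succ {D : ℕ} (u : List (Fin k)) (T : FullTree k D) (t : ℕ) :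
    treeLik qt v pix u T (t + 1) = treeLik qt v pix u T t *
      if u <+: pix t then qt t (T.leafOf u ((pix t).drop u.length)) (v t) else 1 :=
  prod_range_succ _ _

theorem treeLik_leaf {D : ℕ} (u : List (Fin k)) (t : ℕ) :
    treeLik qt v pix u (.leaf : FullTree k D) t = blockLik qt v pix u t := by
  simp only [treeLik, blockLik, FullTree.leafOf]

theorem treeLik_node {D : ℕ} (u : List (Fin k)) (c : Fin k → FullTree k D) (t : ℕ)
    (hlen : ∀ i, u.length < (pix i).length) :
    treeLik qt v pix u (.node c) t = ∏ j, treeLik qt v pix (u ++ [j]) (c j) t := by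
  unfold treeLik
  rw [prod_comm]
  refine prod_congr rfl fun i _ => ?_
  simp_rw [List.append_singleton_prefix_iff (hlen i)]
  by_cases hu : u <+: pix i
  · simp only [hu, true_and, if_true, Fintype.prod_ite_eq, List.drop_eq_getElem_cons (hlen i)]
    simp [FullTree.leafOf]
  · simp [hu]

theorem mixLik_zero (u : List (Fin k)) (t : ℕ) :
    mixLik qt v pix g 0 u t = (1 - g u) * blockLik qt v pix u t := by
  rw [mixLik, FullTree.sum_univ_zero, FullTree.weight_leaf, treeLik_leaf]

theorem mixLik_succ {D : ℕ} (u : List (Fin k)) (t : ℕ)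
    (hlen : ∀ i, u.length < (pix i).length) :
    mixLik qt v pix g (D + 1) u t
      = (1 - g u) * blockLik qt v pix u t + g u * ∏ j, mixLik qt v pix g D (u ++ [j]) t := by
  simp only [mixLik, FullTree.sum_univ_succ, FullTree.weight_leaf, treeLik_leaf,
    FullTree.weight_node, treeLik_node u _ t hlen, mul_assoc, ← prod_mul_distrib, ← mul_sum,
    prod_univ_sum, Fintype.piFinset_univ]

theorem mixLik_succ_time_of_not_prefix {D : ℕ} {u : List (Fin k)} {t : ℕ}
    (h : ¬ u <+: pix t) :
    mixLik qt v pix g D u (t + 1) = mixLik qt v pix g D u t := by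
  simp only [mixLik, treeLik_succ, if_neg h, mul_one]

theorem prod_mixLik_succ_time {D : ℕ} {u : List (Fin k)} {t : ℕ}
    (hu : u.length < (pix t).length) {q : ℝ}
    (h : mixLik qt v pix g D (u ++ [(pix t)[u.length]]) (t + 1)
      = mixLik qt v pix g D (u ++ [(pix t)[u.length]]) t * q) :
    ∏ j, mixLik qt v pix g D (u ++ [j]) (t + 1)
      = (∏ j, mixLik qt v pix g D (u ++ [j]) t) * q := by
  rw [← Fintype.prod_ite_eq' (pix t)[u.length] (fun _ => q), ← prod_mul_distrib]
  refine prod_congr rfl fun j _ => ?_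
  split_ifs with hj
  · exact hj ▸ h
  · rw [mul_one, mixLik_succ_time_of_not_prefix]
    exact fun hc => hj ((List.append_singleton_prefix_iff hu).1 hc).2.symm

end Likelihood

section Depth

variable {k : ℕ} {V : Type*} {qt : ℕ → List (Fin k) → V → ℝ} {v : ℕ → V}
  {pix : ℕ → List (Fin k)} {g : List (Fin k) → ℝ} {dmax : ℕ}

theorem mixLik_time_zero (hg1 : ∀ s : List (Fin k), s.length = dmax → g s = 0)
    (hpix : ∀ i, (pix i).length = dmax) :
    ∀ (D : ℕ) (u : List (Fin k)), u.length + D = dmax → mixLik qt v pix g D u 0 = 1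
  | 0, u, h => by rw [mixLik_zero, hg1 u h, blockLik, prod_range_zero, sub_zero, mul_one]
  | D + 1, u, h => by
    rw [mixLik_succ u 0 fun i => by rw [hpix]; omega, blockLik, prod_range_zero,
      prod_eq_one fun j _ => mixLik_time_zero hg1 hpix D (u ++ [j]) (by simp; omega)]
    ring

theorem mixLik_pos (hg : ∀ s : List (Fin k), s.length ≤ dmax → g s ∈ Set.Icc (0 : ℝ) 1)
    (hg1 : ∀ s : List (Fin k), s.length = dmax → g s = 0) (hqt : ∀ t s x, 0 < qt t s x)
    (hpix : ∀ i, (pix i).length = dmax) (t : ℕ) :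
    ∀ (D : ℕ) (u : List (Fin k)), u.length + D = dmax → 0 < mixLik qt v pix g D u t
  | 0, u, h => by simpa [mixLik_zero, hg1 u h] using blockLik_pos hqt u t
  | D + 1, u, h => by
    obtain ⟨hlo, hhi⟩ := hg u (by omega)
    have hE := blockLik_pos (v := v) (pix := pix) hqt u t
    have hC : 0 < ∏ j, mixLik qt v pix g D (u ++ [j]) t :=
      prod_pos fun j _ => mixLik_pos hg hg1 hqt hpix t D (u ++ [j]) (by simp; omega)
    rw [mixLik_succ u t fun i => by rw [hpix]; omega]
    rcases hhi.lt_or_eq with hlt | heq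
    · nlinarith [mul_nonneg hlo hC.le]
    · simpa [heq] using hC

end Depth

section Quadtree

variable {dmax : ℕ} {V : Type} {qt : ℕ → List (Fin 4) → V → ℝ} {v : ℕ → V}
  {pix : ℕ → List (Fin 4)} {g : List (Fin 4) → ℝ}

theorem like_eq_treeLik (m : FullTree 4 dmax) (t : ℕ) :
    like dmax qt v pix m t = treeLik qt v pix [] m t := by
  simp only [like, treeLik, List.nil_prefix, if_true, List.length_nil, List.drop_zero]

theorem Qd_succ_of_prefix {G : List (Fin 4) → ℝ} {t j : ℕ} {u : List (Fin 4)}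
    (hu : u <+: pix t) (hj : u.length + (j + 1) = dmax) :
    Qd dmax qt v pix G t (j + 1) = (1 - G u) * qt t u (v t) + G u * Qd dmax qt v pix G t j := by
  have htake : (pix t).take (dmax - (j + 1)) = u := by
    rw [show dmax - (j + 1) = u.length by omega]
    exact (List.prefix_iff_eq_take.1 hu).symm
  rw [Qd, htake]

variable (dmax qt v pix g) in
/-- `G u` is the posterior probability, given the values before time `t`, that the block `u`
is split. -/
def IsSplitPosterior (G : List (Fin 4) → ℝ) (t : ℕ) : Prop :=
  ∀ u : List (Fin 4), u.length < dmax →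
    G u * mixLik qt v pix g (dmax - u.length) u t
      = g u * ∏ j, mixLik qt v pix g (dmax - u.length - 1) (u ++ [j]) t

theorem IsSplitPosterior.mixLik_succ_time {G : List (Fin 4) → ℝ} {t : ℕ}
    (hG : IsSplitPosterior dmax qt v pix g G t) (hpix : ∀ i, (pix i).length = dmax) :
    ∀ (j : ℕ) (u : List (Fin 4)), u <+: pix t → u.length + j = dmax →
      mixLik qt v pix g j u (t + 1) = mixLik qt v pix g j u t * Qd dmax qt v pix G t j
  | 0, u, hu, hj => by
    have htake : (pix t).take dmax = u := by
      rw [← hj, Nat.add_zero]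
      exact (List.prefix_iff_eq_take.1 hu).symm
    rw [mixLik_zero, mixLik_zero, blockLik_succ, if_pos hu, Qd, htake]
    ring
  | j + 1, u, hu, hj => by
    have hlen : u.length < (pix t).length := by rw [hpix]; omega
    have hlen' : ∀ i, u.length < (pix i).length := fun i => by rw [hpix]; omega
    have hchild := hG.mixLik_succ_time hpix j (u ++ [(pix t)[u.length]])
      ((List.append_singleton_prefix_iff hlen).2 ⟨hu, rfl⟩) (by simp; omega)
    have hsplit := hG u (by omega)
    rw [show dmax - u.length = j + 1 by omega, Nat.add_sub_cancel, mixLik_succ u t hlen']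
      at hsplit
    rw [mixLik_succ u _ hlen', mixLik_succ u _ hlen', blockLik_succ, if_pos hu,
      prod_mixLik_succ_time hlen hchild, Qd_succ_of_prefix hu hj]
    linear_combination (qt t u (v t) - Qd dmax qt v pix G t j) * hsplit

theorem IsSplitPosterior.gnext {G : List (Fin 4) → ℝ} {t : ℕ}
    (hG : IsSplitPosterior dmax qt v pix g G t)
    (hg : ∀ s : List (Fin 4), s.length ≤ dmax → g s ∈ Set.Icc (0 : ℝ) 1)
    (hg1 : ∀ s : List (Fin 4), s.length = dmax → g s = 0) (hqt : ∀ t s x, 0 < qt t s x)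
    (hpix : ∀ i, (pix i).length = dmax) :
    IsSplitPosterior dmax qt v pix g (Gnext dmax qt v pix G t) (t + 1) := by
  intro u hu
  by_cases hut : u <+: pix t
  · have hlen : u.length < (pix t).length := by rw [hpix]; omega
    have hW := hG.mixLik_succ_time hpix (dmax - u.length) u hut (by omega)
    have hchild := hG.mixLik_succ_time hpix (dmax - u.length - 1) (u ++ [(pix t)[u.length]])
      ((List.append_singleton_prefix_iff hlen).2 ⟨hut, rfl⟩) (by simp; omega)
    have hQ : Qd dmax qt v pix G t (dmax - u.length) ≠ 0 := by
      intro h0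
      have := mixLik_pos (v := v) hg hg1 hqt hpix (t + 1) (dmax - u.length) u (by omega)
      rw [hW, h0, mul_zero] at this
      exact this.false
    rw [Gnext, if_pos ⟨hut, hu⟩, hW, prod_mixLik_succ_time hlen hchild, div_mul_eq_mul_div,
      div_eq_iff hQ]
    linear_combination Qd dmax qt v pix G t (dmax - u.length - 1)
      * Qd dmax qt v pix G t (dmax - u.length) * hG u hu
  · have hchild (j : Fin 4) : ¬ u ++ [j] <+: pix t := fun h => hut ((u.prefix_append _).trans h)
    simp only [Gnext, hut, false_and, if_false, mixLik_succ_time_of_not_prefix hut,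
      mixLik_succ_time_of_not_prefix (hchild _)]
    exact hG u hu

theorem isSplitPosterior_GT
    (hg : ∀ s : List (Fin 4), s.length ≤ dmax → g s ∈ Set.Icc (0 : ℝ) 1)
    (hg1 : ∀ s : List (Fin 4), s.length = dmax → g s = 0) (hqt : ∀ t s x, 0 < qt t s x)
    (hpix : ∀ i, (pix i).length = dmax) :
    ∀ t, IsSplitPosterior dmax qt v pix g (GT dmax qt v pix g t) t
  | 0 => fun u hu => by
    rw [GT, mixLik_time_zero hg1 hpix _ u (by omega),
      prod_eq_one fun j _ => mixLik_time_zero hg1 hpix _ (u ++ [j]) (by simp; omega)]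
  | t + 1 => (isSplitPosterior_GT hg hg1 hqt hpix t).gnext hg hg1 hqt hpix

end Quadtree

/-- Blocks of the `2^dmax × 2^dmax` grid are encoded by their quadrant paths `List (Fin 4)`
of length `≤ dmax` (the root block `s_λ` is `[]`, singleton blocks are paths of length
`dmax`), pixels by paths of full length `dmax`, and `pix t` is the pixel scanned at time `t`. -/
theorem stmt8_general (dmax : ℕ) (V : Type)
    (g : List (Fin 4) → ℝ)
    (hg : ∀ s : List (Fin 4), s.length ≤ dmax → g s ∈ Set.Icc (0 : ℝ) 1)
    (hg1 : ∀ s : List (Fin 4), s.length = dmax → g s = 0)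
    (qt : ℕ → List (Fin 4) → V → ℝ)
    (hqt : ∀ t s x, 0 < qt t s x)
    (v : ℕ → V) (pix : ℕ → List (Fin 4))
    (hpix : ∀ i, (pix i).length = dmax)
    (t : ℕ) :
    (∑ m : FullTree 4 dmax,
        (FullTree.weight g [] m * like dmax qt v pix m t
            / ∑ m' : FullTree 4 dmax, FullTree.weight g [] m' * like dmax qt v pix m' t)
          * qt t (FullTree.leafOf [] m (pix t)) (v t))
      = Qd dmax qt v pix (GT dmax qt v pix g t) t dmax := by
  have hevidence (s : ℕ) :
      ∑ m : FullTree 4 dmax, FullTree.weight g [] m * like dmax qt v pix m s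
        = mixLik qt v pix g dmax [] s := by
    simp only [mixLik, like_eq_treeLik]
  have hjoint : ∑ m : FullTree 4 dmax, FullTree.weight g [] m * like dmax qt v pix m t
      * qt t (FullTree.leafOf [] m (pix t)) (v t) = mixLik qt v pix g dmax [] (t + 1) := by
    simp only [← hevidence, like, prod_range_succ, mul_assoc]
  have hroot := (isSplitPosterior_GT (v := v) hg hg1 hqt hpix t).mixLik_succ_time hpix dmax []
    List.nil_prefix (zero_add dmax)
  have hpos := mixLik_pos (v := v) hg hg1 hqt hpix t dmax [] (zero_add dmax)
  simp only [div_mul_eq_mul_div, ← sum_div, hevidence, hjoint, hroot]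
  exact mul_div_cancel_left₀ _ hpos.ne'

/-- Theorem 1.  Blocks of the `2^dmax × 2^dmax` grid are encoded by their
quadrant paths `List (Fin 4)` of length `≤ dmax` (the root block `s_λ` is `[]`, singleton
blocks are paths of length `dmax`), pixels by paths of full length `dmax`, and `pix t` is
the pixel scanned at time `t` (an injective raster-scan enumeration of the `4^dmax` pixels).
With model prior `p(m) = weight g [] m = ∏_{s ∈ L^m} (1-g_s) ∏_{s' ∈ I^m} g_{s'}`,
likelihood `p(v^{t-1} | m) = like dmax qt v pix m t`, and posterior
`p(m | v^{t-1}) = p(m) p(v^{t-1} | m) / ∑_{m'} p(m') p(v^{t-1} | m')`, the Bayes optimal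
coding probability `q*(v_t | v^{t-1}) = ∑_m p(m | v^{t-1}) q̃(v_t | v^{t-1}, s_m(t))`
equals the value `q(v_t | v^{t-1}, s_λ)` computed by the recursive algorithm at the
root block. -/
theorem stmt8 (dmax : ℕ) (V : Type) [Fintype V]
    (g : List (Fin 4) → ℝ)
    (hg : ∀ s : List (Fin 4), s.length ≤ dmax → g s ∈ Set.Icc (0 : ℝ) 1)
    (hg1 : ∀ s : List (Fin 4), s.length = dmax → g s = 0)
    (qt : ℕ → List (Fin 4) → V → ℝ)
    (hqt : ∀ t s x, 0 < qt t s x)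
    (hqts : ∀ t s, ∑ x : V, qt t s x = 1)
    (v : ℕ → V) (pix : ℕ → List (Fin 4))
    (hpix : ∀ i, (pix i).length = dmax)
    (hinj : ∀ i j, i < 4 ^ dmax → j < 4 ^ dmax → pix i = pix j → i = j)
    (t : ℕ) (ht : t < 4 ^ dmax) :
    (∑ m : FullTree 4 dmax,
        (FullTree.weight g [] m * like dmax qt v pix m t
            / ∑ m' : FullTree 4 dmax, FullTree.weight g [] m' * like dmax qt v pix m' t)
          * qt t (FullTree.leafOf [] m (pix t)) (v t))
      = Qd dmax qt v pix (GT dmax qt v pix g t) t dmax :=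
  stmt8_general dmax V g hg hg1 qt hqt v pix hpix t
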